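/- Every CXp (subset-minimal weak CXp) is a minimal hitting set of the collection of all AXp's, assuming S is finite and z is sufficient for T with T a proper subset of K and κ surjective. -/
import Mathlib


def WAXp {ι K : Type*} {D : ι → Type*} (κ : (∀ i, D i) → K)
    (z : ∀ i, D i) (T : Set K) (X : Set ι) : Prop :=
  ∀ x : ∀ i, D i, (∀ i ∈ X, x i = z i) → κ x ∈ T

def WCXp {ι K : Type*} {D : ι → Type*} (κ : (∀ i, D i) → K)
    (z : ∀ i, D i) (S : Set ι) (T : Set K) (Y : Set ι) : Prop :=
  ∃ x : ∀ i, D i, (∀ i ∈ S \ Y, x i = z i) ∧ κ x ∉ T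

def AXp {ι K : Type*} {D : ι → Type*} (κ : (∀ i, D i) → K)
    (z : ∀ i, D i) (S : Set ι) (T : Set K) (X : Set ι) : Prop :=
  X ⊆ S ∧ WAXp κ z T X ∧ ∀ X' ⊂ X, ¬ WAXp κ z T X'

def CXp {ι K : Type*} {D : ι → Type*} (κ : (∀ i, D i) → K)
    (z : ∀ i, D i) (S : Set ι) (T : Set K) (Y : Set ι) : Prop :=
  Y ⊆ S ∧ WCXp κ z S T Y ∧ ∀ Y' ⊂ Y, ¬ WCXp κ z S T Y'

theorem WAXp_min {ι K : Type*} {D : ι → Type*} (κ : (∀ i, D i) → K)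
    (z : ∀ i, D i) (T : Set K) (X : Set ι) (hfin : X.Finite)
    (hW : WAXp κ z T X) :
    ∃ X', X' ⊆ X ∧ WAXp κ z T X' ∧ ∀ X'' ⊂ X', ¬ WAXp κ z T X'' := by
  obtain ⟨n, hn⟩ : ∃ n, X.ncard = n := ⟨_, rfl⟩
  induction n using Nat.strong_induction_on generalizing X with
  | _ n ih =>
    by_cases h : ∀ X'' ⊂ X, ¬ WAXp κ z T X''
    · exact ⟨X, subset_rfl, hW, h⟩
    · push_neg at h
      obtain ⟨X'', hX'', hW''⟩ := h
      obtain ⟨X', h1, h2, h3⟩ := ih X''.ncard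
        (hn ▸ Set.ncard_lt_ncard hX'' hfin) X''
        (hfin.subset hX''.subset) hW'' rfl
      exact ⟨X', h1.trans hX''.subset, h2, h3⟩

/-- MHS duality, other direction: assuming `S` finite, `z` sufficient for
`T`, `T ⊊ K` and `κ` surjective, every CXp is a minimal hitting set of the
collection of all AXp's. -/
theorem CXp_is_MHS_of_AXps {ι K : Type*} {D : ι → Type*}
    (κ : (∀ i, D i) → K) (z : ∀ i, D i) (S : Set ι) (T : Set K)
    (hSfin : S.Finite)
    (hsuff : ∀ x : ∀ i, D i, (∀ i ∈ S, x i = z i) → κ x ∈ T)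
    (hT : T ⊂ Set.univ) (hsurj : Function.Surjective κ)
    (Y : Set ι) (hY : CXp κ z S T Y) :
    (∀ X, AXp κ z S T X → (Y ∩ X).Nonempty) ∧
      ∀ Y' ⊂ Y, ¬ ∀ X, AXp κ z S T X → (Y' ∩ X).Nonempty := by
  obtain ⟨hYS, ⟨x, hxz, hxT⟩, hmin⟩ := hY
  constructor
  · intro X hX
    by_contra hne
    rw [Set.not_nonempty_iff_eq_empty] at hne
    exact hxT (hX.2.1 x fun i hi => hxz i ⟨hX.1 hi,
      fun hiY => (Set.eq_empty_iff_forall_notMem.mp hne i) ⟨hiY, hi⟩⟩)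
  · intro Y' hY' hhit
    have hW : WAXp κ z T (S \ Y') := by
      intro x hx
      by_contra hxT'
      exact hmin Y' hY' ⟨x, hx, hxT'⟩
    obtain ⟨X, hXsub, hXW, hXmin⟩ :=
      WAXp_min κ z T (S \ Y') (hSfin.subset (Set.diff_subset)) hW
    obtain ⟨i, hiY', hiX⟩ := hhit X ⟨hXsub.trans Set.diff_subset, hXW, hXmin⟩
    exact (hXsub hiX).2 hiY'
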